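/- Let V be a compact metric space, λ the Lebesgue measure on [0,T], and ζ, ζ^k ∈ Λ([0,T], λ, V) (measures on [0,T]×V with time marginal λ) with ζ^k → ζ narrowly. Let ψ : [0,T]×V → ℝ^{d'} be continuous. Then ∫_{[0,t]×V} ψ dζ^k → ∫_{[0,t]×V} ψ dζ uniformly in t ∈ [0,T]. -/

import Mathlib

/-!
Narrow convergence only tests continuous integrands, while `∫_{[0,t]×V} ψ` cuts `ψ` off
sharply at time `t`. Replacing the cut-off by a continuous ramp from `1` at `t` to `0` at
`t + δ` changes these integrals by at most `‖ψ‖∞ δ` for every relaxed control, because the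
time marginal of a relaxed control is Lebesgue measure. Hence they converge for each `t`.
For the same reason `t ↦ ∫_{[0,t]×V} ψ` is `‖ψ‖∞`-Lipschitz for every relaxed control, and an
equicontinuous family converging pointwise on the compact interval `[0,T]` converges uniformly.
-/

open MeasureTheory Filter Set Topology
open scoped BoundedContinuousFunction

theorem EquicontinuousOn.tendstoUniformlyOn_of_tendsto {ι X α : Type*} [TopologicalSpace X]
    [UniformSpace α] {F : ι → X → α} {f : X → α} {K : Set X} {l : Filter ι}
    (hK : IsCompact K) (hF : EquicontinuousOn F K) (h : ∀ x ∈ K, Tendsto (F · x) l (𝓝 (f x))) :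
    TendstoUniformlyOn F f l K := by
  have key := (EquicontinuousOn.tendsto_uniformOnFun_iff_pi' (𝔖 := {K})
    (by simpa using hK) (by simpa using hF) l f).2 (by
      rw [tendsto_pi_nhds]
      rintro ⟨x, hx⟩
      exact h x (by simpa using hx))
  exact (UniformOnFun.tendsto_iff_tendstoUniformlyOn.1 key) K rfl

theorem tendsto_integral_of_forall_tendsto_integral_real {ι X E : Type*}
    [TopologicalSpace X] [MeasurableSpace X] [OpensMeasurableSpace X]
    [NormedAddCommGroup E] [NormedSpace ℝ E] [FiniteDimensional ℝ E]
    {μs : ι → Measure X} {μ : Measure X} [∀ i, IsFiniteMeasure (μs i)] [IsFiniteMeasure μ]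
    {l : Filter ι}
    (h : ∀ f : X →ᵇ ℝ, Tendsto (fun i => ∫ x, f x ∂(μs i)) l (𝓝 (∫ x, f x ∂μ)))
    (g : X →ᵇ E) :
    Tendsto (fun i => ∫ x, g x ∂(μs i)) l (𝓝 (∫ x, g x ∂μ)) := by
  borelize E
  let e := (Module.finBasis ℝ E).equivFunL
  rw [e.toHomeomorph.isInducing.tendsto_nhds_iff, tendsto_pi_nhds]
  intro j
  let L : E →L[ℝ] ℝ :=
    (ContinuousLinearMap.proj (R := ℝ) (φ := fun _ => ℝ) j).comp (e : E →L[ℝ] _)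
  have hL : ∀ ν : Measure X, IsFiniteMeasure ν →
      e (∫ x, g x ∂ν) j = ∫ x, (g.comp L L.lipschitz) x ∂ν :=
    fun ν _ => (L.integral_comp_comm (g.integrable ν)).symm
  simp only [Function.comp_def, ContinuousLinearEquiv.coe_toHomeomorph, hL]
  exact h _

section RampDown

variable {s t δ : ℝ}

noncomputable def rampDown (t δ s : ℝ) : ℝ := projIcc 0 1 zero_le_one ((t + δ - s) / δ)

lemma continuous_rampDown : Continuous (rampDown t δ) := by
  unfold rampDown; fun_prop

lemma abs_rampDown_le_one : |rampDown t δ s| ≤ 1 := by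
  obtain ⟨h0, h1⟩ : rampDown t δ s ∈ Icc 0 1 := Subtype.prop _
  exact abs_le.2 ⟨by linarith, h1⟩

lemma rampDown_of_le (hδ : 0 < δ) (hs : s ≤ t) : rampDown t δ s = 1 := by
  rw [rampDown, projIcc_of_right_le _ ((one_le_div hδ).2 (by linarith))]

lemma rampDown_of_add_le (hδ : 0 < δ) (hs : t + δ ≤ s) : rampDown t δ s = 0 := by
  rw [rampDown, projIcc_of_le_left _ (div_nonpos_of_nonpos_of_nonneg (by linarith) hδ.le)]

variable {V E : Type*} [TopologicalSpace V] [NormedAddCommGroup E] [NormedSpace ℝ E]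

lemma norm_rampDown_smul_le (g : ℝ × V →ᵇ E) (z : ℝ × V) : ‖rampDown t δ z.1 • g z‖ ≤ ‖g‖ := by
  rw [norm_smul, Real.norm_eq_abs]
  exact (mul_le_of_le_one_left (norm_nonneg _) abs_rampDown_le_one).trans (g.norm_coe_le_norm z)

noncomputable def smulRampDown (g : ℝ × V →ᵇ E) (t δ : ℝ) : ℝ × V →ᵇ E :=
  .ofNormedAddCommGroup (fun z => rampDown t δ z.1 • g z)
    ((continuous_rampDown.comp continuous_fst).smul g.continuous) ‖g‖ (norm_rampDown_smul_le g)

@[simp]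
lemma smulRampDown_apply (g : ℝ × V →ᵇ E) (z : ℝ × V) :
    smulRampDown g t δ z = rampDown t δ z.1 • g z :=
  rfl

end RampDown

section RelaxedControl

variable {V E : Type*} [MeasurableSpace V] [NormedAddCommGroup E] [NormedSpace ℝ E]
  {T s t δ C : ℝ} {μ : Measure (ℝ × V)} {f : ℝ × V → E}

noncomputable def integralUpTo (μ : Measure (ℝ × V)) (f : ℝ × V → E) (t : ℝ) : E :=
  ∫ z in Icc 0 t ×ˢ univ, f z ∂μ

lemma measure_prod_univ_of_map_fst_eq (hμ : μ.map Prod.fst = volume.restrict (Icc 0 T))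
    {s : Set ℝ} (hs : MeasurableSet s) : μ (s ×ˢ univ) = volume (s ∩ Icc 0 T) := by
  rw [prod_univ, ← Measure.map_apply measurable_fst hs, hμ, Measure.restrict_apply hs]

lemma isFiniteMeasure_of_map_fst_eq (hμ : μ.map Prod.fst = volume.restrict (Icc 0 T)) :
    IsFiniteMeasure μ := by
  constructor
  simpa using (measure_prod_univ_of_map_fst_eq hμ .univ).trans_lt
    (measure_inter_lt_top_of_right_ne_top measure_Icc_lt_top.ne)

lemma ae_fst_mem_Icc_of_map_fst_eq (hμ : μ.map Prod.fst = volume.restrict (Icc 0 T)) :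
    ∀ᵐ z ∂μ, z.1 ∈ Icc 0 T :=
  ae_of_ae_map measurable_fst.aemeasurable (hμ ▸ ae_restrict_mem measurableSet_Icc)

lemma measureReal_Ioc_prod_univ_le (hμ : μ.map Prod.fst = volume.restrict (Icc 0 T))
    (hst : s ≤ t) : μ.real (Ioc s t ×ˢ univ) ≤ t - s := by
  rw [measureReal_def, measure_prod_univ_of_map_fst_eq hμ measurableSet_Ioc]
  refine ENNReal.toReal_le_of_le_ofReal (sub_nonneg.2 hst) ?_
  exact (measure_mono inter_subset_left).trans Real.volume_Ioc.le

lemma norm_setIntegral_Ioc_prod_univ_le (hμ : μ.map Prod.fst = volume.restrict (Icc 0 T))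
    (hC0 : 0 ≤ C) (hC : ∀ z, ‖f z‖ ≤ C) (hst : s ≤ t) :
    ‖∫ z in Ioc s t ×ˢ univ, f z ∂μ‖ ≤ C * (t - s) := by
  have := isFiniteMeasure_of_map_fst_eq hμ
  calc ‖∫ z in Ioc s t ×ˢ univ, f z ∂μ‖ ≤ C * μ.real (Ioc s t ×ˢ univ) :=
        norm_setIntegral_le_of_norm_le_const (measure_lt_top _ _) fun z _ => hC z
    _ ≤ C * (t - s) := by gcongr; exact measureReal_Ioc_prod_univ_le hμ hst

lemma integralUpTo_eq_add (hf : Integrable f μ) (hs : 0 ≤ s) (hst : s ≤ t) :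
    integralUpTo μ f t = integralUpTo μ f s + ∫ z in Ioc s t ×ˢ univ, f z ∂μ := by
  rw [integralUpTo, ← Icc_union_Ioc_eq_Icc hs hst, union_prod]
  refine setIntegral_union ?_ (measurableSet_Ioc.prod .univ) hf.integrableOn hf.integrableOn
  exact Disjoint.set_prod_left ((Iic_disjoint_Ioc le_rfl).mono_left Icc_subset_Iic_self) _ _

lemma norm_integralUpTo_sub_le (hμ : μ.map Prod.fst = volume.restrict (Icc 0 T))
    (hf : Integrable f μ) (hC0 : 0 ≤ C) (hC : ∀ z, ‖f z‖ ≤ C) (hs : 0 ≤ s) (hst : s ≤ t) :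
    ‖integralUpTo μ f t - integralUpTo μ f s‖ ≤ C * (t - s) := by
  rw [integralUpTo_eq_add hf hs hst, add_sub_cancel_left]
  exact norm_setIntegral_Ioc_prod_univ_le hμ hC0 hC hst

variable [TopologicalSpace V] [OpensMeasurableSpace V] [SecondCountableTopology E]

lemma lipschitzOnWith_integralUpTo (hμ : μ.map Prod.fst = volume.restrict (Icc 0 T))
    (g : ℝ × V →ᵇ E) : LipschitzOnWith ‖g‖₊ (integralUpTo μ g) (Ici 0) := by
  have := isFiniteMeasure_of_map_fst_eq hμ
  borelize E
  refine LipschitzOnWith.of_dist_le_mul fun t ht s hs => ?_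
  wlog hst : s ≤ t generalizing s t
  · rw [dist_comm, dist_comm t]; exact this s hs t ht (le_of_not_ge hst)
  rw [dist_eq_norm, Real.dist_eq, abs_of_nonneg (sub_nonneg.2 hst), coe_nnnorm]
  exact norm_integralUpTo_sub_le hμ (g.integrable μ) (norm_nonneg g) g.norm_coe_le_norm hs hst

lemma norm_integral_smulRampDown_sub_integralUpTo_le
    (hμ : μ.map Prod.fst = volume.restrict (Icc 0 T)) (g : ℝ × V →ᵇ E) (hδ : 0 < δ)
    (ht : 0 ≤ t) : ‖∫ z, smulRampDown g t δ z ∂μ - integralUpTo μ g t‖ ≤ ‖g‖ * δ := by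
  have := isFiniteMeasure_of_map_fst_eq hμ
  borelize E
  have h_vanish :
      integralUpTo μ (smulRampDown g t δ) (t + δ) = ∫ z, smulRampDown g t δ z ∂μ := by
    refine setIntegral_eq_integral_of_ae_compl_eq_zero ?_
    filter_upwards [ae_fst_mem_Icc_of_map_fst_eq hμ] with z hz hout
    have : t + δ ≤ z.1 := by
      by_contra! h; exact hout ⟨⟨hz.1, h.le⟩, mem_univ _⟩
    simp [rampDown_of_add_le hδ this]
  have h_one : integralUpTo μ (smulRampDown g t δ) t = integralUpTo μ g t :=
    setIntegral_congr_fun (measurableSet_Icc.prod .univ) fun z hz => by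
      simp [rampDown_of_le hδ hz.1.2]
  rw [← h_vanish, integralUpTo_eq_add ((smulRampDown g t δ).integrable μ) ht (by linarith),
    h_one, add_sub_cancel_left]
  simpa using norm_setIntegral_Ioc_prod_univ_le (f := smulRampDown g t δ) hμ (norm_nonneg g)
    (norm_rampDown_smul_le g) (by linarith : t ≤ t + δ)

lemma tendsto_integralUpTo {ι : Type*} {l : Filter ι} {μs : ι → Measure (ℝ × V)}
    (hμs : ∀ i, (μs i).map Prod.fst = volume.restrict (Icc 0 T))
    (hμ : μ.map Prod.fst = volume.restrict (Icc 0 T))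
    (hnarrow : ∀ f : ℝ × V →ᵇ E, Tendsto (fun i => ∫ z, f z ∂(μs i)) l (𝓝 (∫ z, f z ∂μ)))
    (g : ℝ × V →ᵇ E) (ht : 0 ≤ t) :
    Tendsto (fun i => integralUpTo (μs i) g t) l (𝓝 (integralUpTo μ g t)) := by
  refine Metric.tendsto_nhds.2 fun ε hε => ?_
  set δ := ε / (4 * (‖g‖ + 1))
  have hδ : 0 < δ := by positivity
  have hgδ : ‖g‖ * δ < ε / 4 := by
    calc ‖g‖ * δ < (‖g‖ + 1) * δ := by gcongr; linarith
      _ = ε / 4 := by simp only [δ]; field_simp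
  filter_upwards [Metric.tendsto_nhds.1 (hnarrow (smulRampDown g t δ)) (ε / 2) (by positivity)]
    with i hi
  have hi_approx :
      dist (integralUpTo (μs i) g t) (∫ z, smulRampDown g t δ z ∂(μs i)) ≤ ‖g‖ * δ := by
    rw [dist_comm, dist_eq_norm]
    exact norm_integral_smulRampDown_sub_integralUpTo_le (hμs i) g hδ ht
  have h_approx : dist (∫ z, smulRampDown g t δ z ∂μ) (integralUpTo μ g t) ≤ ‖g‖ * δ := by
    rw [dist_eq_norm]
    exact norm_integral_smulRampDown_sub_integralUpTo_le hμ g hδ ht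
  linarith [dist_triangle4 (integralUpTo (μs i) g t) (∫ z, smulRampDown g t δ z ∂(μs i))
    (∫ z, smulRampDown g t δ z ∂μ) (integralUpTo μ g t)]

theorem tendstoUniformlyOn_integralUpTo {ι : Type*} {l : Filter ι} {μs : ι → Measure (ℝ × V)}
    (hμs : ∀ i, (μs i).map Prod.fst = volume.restrict (Icc 0 T))
    (hμ : μ.map Prod.fst = volume.restrict (Icc 0 T))
    (hnarrow : ∀ f : ℝ × V →ᵇ E, Tendsto (fun i => ∫ z, f z ∂(μs i)) l (𝓝 (∫ z, f z ∂μ)))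
    (g : ℝ × V →ᵇ E) :
    TendstoUniformlyOn (fun i => integralUpTo (μs i) g) (integralUpTo μ g) l (Icc 0 T) :=
  EquicontinuousOn.tendstoUniformlyOn_of_tendsto isCompact_Icc
    (LipschitzOnWith.uniformEquicontinuousOn _ ‖g‖₊ fun i =>
      (lipschitzOnWith_integralUpTo (hμs i) g).mono Icc_subset_Ici_self).equicontinuousOn
    fun _ ht => tendsto_integralUpTo hμs hμ hnarrow g ht.1

end RelaxedControl

theorem Continuous.exists_boundedContinuous_eqOn_Icc_prod {V β : Type*} [TopologicalSpace V]
    [CompactSpace V] [PseudoMetricSpace β] {f : ℝ × V → β} (hf : Continuous f) {a b : ℝ}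
    (hab : a ≤ b) : ∃ g : ℝ × V →ᵇ β, EqOn g f (Icc a b ×ˢ univ) :=
  ⟨(BoundedContinuousFunction.mkOfCompact ⟨fun p : Icc a b × V => f (p.1, p.2), by fun_prop⟩
    ).compContinuous ⟨Prod.map (projIcc a b hab) id, by fun_prop⟩,
    fun z hz => by simp [projIcc_of_mem hab hz.1]⟩

/-- for relaxed controls `ζ^k → ζ` narrowly (all with time marginal equal to
Lebesgue measure on `[0,T]`) and continuous `ψ`, the truncated integrals
`∫_{[0,t]×V} ψ dζ^k` converge to `∫_{[0,t]×V} ψ dζ` uniformly in `t ∈ [0,T]`. -/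
theorem relaxed_control_integrals_tendsto_uniformly (T : ℝ) (hT : 0 < T)
    {V : Type*} [MetricSpace V] [CompactSpace V] [MeasurableSpace V] [BorelSpace V]
    (d' : ℕ)
    (ζ : Measure (ℝ × V)) (ζk : ℕ → Measure (ℝ × V))
    (hζ : ζ.map Prod.fst = volume.restrict (Set.Icc 0 T))
    (hζk : ∀ k, (ζk k).map Prod.fst = volume.restrict (Set.Icc 0 T))
    (hnarrow : ∀ f : BoundedContinuousFunction (ℝ × V) ℝ,
      Tendsto (fun k => ∫ z, f z ∂(ζk k)) atTop (nhds (∫ z, f z ∂ζ)))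
    (ψ : ℝ × V → EuclideanSpace ℝ (Fin d')) (hψ : Continuous ψ) :
    TendstoUniformlyOn
      (fun k t => ∫ z in Set.Icc (0 : ℝ) t ×ˢ (Set.univ : Set V), ψ z ∂(ζk k))
      (fun t => ∫ z in Set.Icc (0 : ℝ) t ×ˢ (Set.univ : Set V), ψ z ∂ζ)
      atTop (Set.Icc 0 T) := by
  have := isFiniteMeasure_of_map_fst_eq hζ
  have := fun k => isFiniteMeasure_of_map_fst_eq (hζk k)
  obtain ⟨g, hg⟩ := hψ.exists_boundedContinuous_eqOn_Icc_prod hT.le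
  have h_eq (μ : Measure (ℝ × V)) : EqOn (integralUpTo μ g) (integralUpTo μ ψ) (Icc 0 T) :=
    fun t ht => setIntegral_congr_fun (measurableSet_Icc.prod .univ)
      (hg.mono (prod_mono (Icc_subset_Icc_right ht.2) subset_rfl))
  exact ((tendstoUniformlyOn_integralUpTo hζk hζ
    (tendsto_integral_of_forall_tendsto_integral_real hnarrow) g).congr
    (.of_forall fun k => h_eq (ζk k))).congr_right (h_eq ζ)
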